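/- arXiv:hep-th/0609125 — 11 statements merged into one kernel-verified Lean document; each statement's English description precedes it below -/
import Mathlib

section
/- Let n > 0, E ∈ ℝ, k ∈ ℝ, and let P, u : ℝ → ℝ with u twice differentiable and u(x) > 0 for all x, satisfying the Schrödinger-type equation u''(x) + (E − P(x)) u(x) = −(n k/2) u(x)^((4−n)/n) (real power) for all x. Let σ : ℝ → ℝ be differentiable on an open interval I with σ'(t) = u(σ(t)) for t ∈ I. Define a(t) = u(σ(t))^(−2/n) and H(t) = a'(t)/a(t). Then for all t ∈ I: P(σ(t)) · u(σ(t))² = −(n/2) H'(t) + E · a(t)^(−n) + (n k/2) · a(t)^(−2). -/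
/-!
Along the trajectory `σ' = u ∘ σ` the chain rule turns `d/dt` into `u · d/dx`, so the Hubble
parameter of `a = (u ∘ σ)^(-2/n)` is `H = -(2/n) · u' ∘ σ` and `H' = -(2/n) · (u'' u) ∘ σ`.
Since `a^(-n) = u²` and `a^(-2) = u^(4/n) = u^((4-n)/n) · u`, identity (3.12) is the
Schrödinger equation multiplied by `u`.
-/

open Set Topology

theorem Real.logDeriv_rpow_const {f : ℝ → ℝ} {x : ℝ} (p : ℝ) (hf : DifferentiableAt ℝ f x)
    (hx : 0 < f x) : logDeriv (fun y => f y ^ p) x = p * logDeriv f x := by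
  rw [logDeriv_apply, logDeriv_apply, (hf.hasDerivAt.rpow_const (Or.inl hx.ne')).deriv,
    Real.rpow_sub_one hx.ne']
  field_simp

theorem logDeriv_rpow_comp_integralCurve {u σ : ℝ → ℝ} {t : ℝ} (p : ℝ)
    (hu : DifferentiableAt ℝ u (σ t)) (hσ : HasDerivAt σ (u (σ t)) t) (hpos : 0 < u (σ t)) :
    logDeriv (fun s => u (σ s) ^ p) t = p * deriv u (σ t) := by
  have hcomp : HasDerivAt (fun s => u (σ s)) (deriv u (σ t) * u (σ t)) t :=
    hu.hasDerivAt.comp t hσ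
  rw [Real.logDeriv_rpow_const p hcomp.differentiableAt hpos, logDeriv_apply, hcomp.deriv]
  field_simp

theorem Real.rpow_div_sub_one_mul_self {x : ℝ} (hx : 0 < x) {m n : ℝ} (hn : n ≠ 0) :
    x ^ ((m - n) / n) * x = x ^ (m / n) := by
  rw [show (m - n) / n = m / n - 1 by field_simp, Real.rpow_sub_one hx.ne']
  field_simp

/-- Equation (3.12): along the trajectory σ, the potential term
P·u² of the Schrödinger-type equation equals −(n/2)H' + E·a^(−n) + (nk/2)a^(−2). -/
theorem potential_term_along_trajectory
    (n E k : ℝ) (hn : 0 < n) (P u : ℝ → ℝ)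
    (hu : Differentiable ℝ u) (hu' : Differentiable ℝ (deriv u))
    (hupos : ∀ x, 0 < u x)
    (hSchr : ∀ x, deriv (deriv u) x + (E - P x) * u x
      = -(n * k / 2) * u x ^ ((4 - n) / n))
    (t₁ t₂ : ℝ) (σ : ℝ → ℝ)
    (hσ : ∀ t ∈ Set.Ioo t₁ t₂, DifferentiableAt ℝ σ t)
    (hσ' : ∀ t ∈ Set.Ioo t₁ t₂, deriv σ t = u (σ t))
    (a H : ℝ → ℝ)
    (ha : a = fun t => u (σ t) ^ (-2 / n))
    (hH : H = fun t => deriv a t / a t) :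
    ∀ t ∈ Set.Ioo t₁ t₂,
      P (σ t) * u (σ t) ^ 2
        = -(n / 2) * deriv H t + E * a t ^ (-n) + n * k / 2 * a t ^ (-2 : ℝ) := by
  intro t ht
  have hflow : ∀ s ∈ Ioo t₁ t₂, HasDerivAt σ (u (σ s)) s := fun s hs =>
    hσ' s hs ▸ (hσ s hs).hasDerivAt
  have hHubble : H =ᶠ[𝓝 t] fun s => -2 / n * deriv u (σ s) := by
    filter_upwards [isOpen_Ioo.mem_nhds ht] with s hs
    rw [hH, ha]
    exact logDeriv_rpow_comp_integralCurve _ (hu _) (hflow s hs) (hupos _)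
  have hH' : deriv H t = -2 / n * (deriv (deriv u) (σ t) * u (σ t)) := by
    rw [hHubble.deriv_eq]
    exact (((hu' (σ t)).hasDerivAt.comp t (hflow t ht)).const_mul _).deriv
  have hu_pos := hupos (σ t)
  have ha_neg_n : a t ^ (-n) = u (σ t) ^ 2 := by
    rw [ha, ← Real.rpow_mul hu_pos.le, ← Real.rpow_natCast]
    congr 1
    field_simp
    norm_num
  have ha_neg_two : a t ^ (-2 : ℝ) = u (σ t) ^ ((4 - n) / n) * u (σ t) := by
    rw [Real.rpow_div_sub_one_mul_self hu_pos hn.ne', ha, ← Real.rpow_mul hu_pos.le]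
    congr 1
    field_simp
    ring
  have hcoeff : -(n / 2) * (-2 / n) = 1 := by field_simp
  rw [hH', ha_neg_n, ha_neg_two]
  linear_combination (-u (σ t)) * hSchr (σ t) - deriv (deriv u) (σ t) * u (σ t) * hcoeff
end

section
/- Let n > 0, E ∈ ℝ, k ∈ ℝ, K > 0, and let P, u : ℝ → ℝ with u twice differentiable, u > 0, satisfying u''(x) + (E − P(x)) u(x) = −(n k/2) u(x)^((4−n)/n) for all x. Let σ be differentiable on an open interval I with σ'(t) = u(σ(t)). Define W(x) = (12/(K² n²)) u'(x)² − (2/(K² n)) u(x)² P(x) + (12 E/(K² n²)) u(x)² + (3k/K²) u(x)^(4/n), a(t) = u(σ(t))^(−2/n), H(t) = a'(t)/a(t), and D = −12E/(n² K²). Then for all t ∈ I: W(σ(t)) = (3/K²)(H(t)² + H'(t)/3 + 2k/(3 a(t)²)) + (n−6) D/(6 a(t)^n). -/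
/-!
Along the trajectory, `σ' = u ∘ σ` makes the Hubble rate of `a = (u ∘ σ)^(-2/n)` equal to
`H = -(2/n) u' ∘ σ`, and hence `H' = -(2/n) (u'' ∘ σ) (u ∘ σ)`. Substituting these, eliminating
`u''` with the Schrödinger equation, and using `a⁻² = u^(4/n)` and `a⁻ⁿ = u²`, both sides become
the same expression in `u`, `u'` and `P` along the trajectory.
-/

theorem logDeriv_fun_rpow_const {f : ℝ → ℝ} {x : ℝ} (hf : DifferentiableAt ℝ f x)
    (hfx : 0 < f x) (p : ℝ) :
    logDeriv (fun y => f y ^ p) x = p * logDeriv f x := by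
  have hderiv := (hf.hasDerivAt.rpow_const (p := p) (Or.inl hfx.ne')).deriv
  rw [logDeriv_apply, logDeriv_apply, hderiv, Real.rpow_sub_one hfx.ne']
  field_simp [(Real.rpow_pos_of_pos hfx p).ne']

theorem logDeriv_comp_of_deriv_eq {u σ : ℝ → ℝ} {t : ℝ} (hu : DifferentiableAt ℝ u (σ t))
    (hσ : DifferentiableAt ℝ σ t) (hσ' : deriv σ t = u (σ t)) (hut : u (σ t) ≠ 0) :
    logDeriv (u ∘ σ) t = deriv u (σ t) := by
  rw [logDeriv_comp hu hσ, hσ', logDeriv_apply]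
  field_simp

theorem logDeriv_rpow_comp_eqOn {u σ : ℝ → ℝ} {s : Set ℝ}
    (hu : Differentiable ℝ u) (hupos : ∀ x, 0 < u x)
    (hσ : ∀ t ∈ s, DifferentiableAt ℝ σ t) (hσ' : ∀ t ∈ s, deriv σ t = u (σ t)) (p : ℝ) :
    Set.EqOn (logDeriv fun t => u (σ t) ^ p) (fun t => p * deriv u (σ t)) s := by
  intro t ht
  have hcomp : DifferentiableAt ℝ (u ∘ σ) t := (hu _).comp t (hσ t ht)
  rw [show (fun t => u (σ t) ^ p) = fun t => (u ∘ σ) t ^ p from rfl,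
    logDeriv_fun_rpow_const hcomp (hupos _),
    logDeriv_comp_of_deriv_eq (hu _) (hσ t ht) (hσ' t ht) (hupos _).ne']

theorem potential_eq_of_schrodinger {n E k K P U U' U'' : ℝ} (hn : n ≠ 0) (hU : 0 < U)
    (hSchr : U'' + (E - P) * U = -(n * k / 2) * U ^ ((4 - n) / n)) :
    12 / (K ^ 2 * n ^ 2) * U' ^ 2 - 2 / (K ^ 2 * n) * U ^ 2 * P
        + 12 * E / (K ^ 2 * n ^ 2) * U ^ 2 + 3 * k / K ^ 2 * U ^ (4 / n)
      = 3 / K ^ 2 * ((-2 / n * U') ^ 2 + -2 / n * (U'' * U) / 3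
          + 2 * k / (3 * (U ^ (-2 / n)) ^ 2))
        + (n - 6) * (-12 * E / (n ^ 2 * K ^ 2)) / (6 * (U ^ (-2 / n)) ^ n) := by
  have hsq : (U ^ (-2 / n)) ^ 2 = (U ^ (4 / n))⁻¹ := by
    rw [← Real.rpow_natCast, ← Real.rpow_mul hU.le, ← Real.rpow_neg hU.le]
    congr 1
    push_cast
    ring
  have hpow : (U ^ (-2 / n)) ^ n = (U ^ 2)⁻¹ := by
    rw [← Real.rpow_mul hU.le, div_mul_cancel₀ _ hn, Real.rpow_neg hU.le, Real.rpow_two]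
  have hmul : U * U ^ ((4 - n) / n) = U ^ (4 / n) := by
    rw [mul_comm, ← Real.rpow_add_one hU.ne']
    congr 1
    field_simp
    ring
  rw [hsq, hpow]
  field_simp
  linear_combination (12 * n * U * K⁻¹ ^ 2) * hSchr + (-6 * n ^ 2 * k * K⁻¹ ^ 2) * hmul

theorem potential_expression_along_trajectory_general
    (n E k K : ℝ) (hn : 0 < n) (P u : ℝ → ℝ)
    (hu : Differentiable ℝ u) (hu' : Differentiable ℝ (deriv u))
    (hupos : ∀ x, 0 < u x)
    (hSchr : ∀ x, deriv (deriv u) x + (E - P x) * u x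
      = -(n * k / 2) * u x ^ ((4 - n) / n))
    (t₁ t₂ : ℝ) (σ : ℝ → ℝ)
    (hσ : ∀ t ∈ Set.Ioo t₁ t₂, DifferentiableAt ℝ σ t)
    (hσ' : ∀ t ∈ Set.Ioo t₁ t₂, deriv σ t = u (σ t))
    (W a H : ℝ → ℝ) (D : ℝ)
    (hW : W = fun x => 12 / (K ^ 2 * n ^ 2) * (deriv u x) ^ 2
      - 2 / (K ^ 2 * n) * u x ^ 2 * P x
      + 12 * E / (K ^ 2 * n ^ 2) * u x ^ 2
      + 3 * k / K ^ 2 * u x ^ (4 / n))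
    (ha : a = fun t => u (σ t) ^ (-2 / n))
    (hH : H = fun t => deriv a t / a t)
    (hD : D = -12 * E / (n ^ 2 * K ^ 2)) :
    ∀ t ∈ Set.Ioo t₁ t₂,
      W (σ t) = 3 / K ^ 2 * (H t ^ 2 + deriv H t / 3 + 2 * k / (3 * a t ^ 2))
        + (n - 6) * D / (6 * a t ^ n) := by
  intro t ht
  have hHubble : Set.EqOn H (fun s => -2 / n * deriv u (σ s)) (Set.Ioo t₁ t₂) := by
    subst hH ha
    exact logDeriv_rpow_comp_eqOn hu hupos hσ hσ' _
  have hHubble' : deriv H t = -2 / n * (deriv (deriv u) (σ t) * u (σ t)) := by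
    have hσt : HasDerivAt σ (u (σ t)) t := hσ' t ht ▸ (hσ t ht).hasDerivAt
    rw [(hHubble.eventuallyEq_of_mem (isOpen_Ioo.mem_nhds ht)).deriv_eq]
    exact (((hu' _).hasDerivAt.comp t hσt).const_mul _).deriv
  subst hW ha hD
  rw [hHubble ht, hHubble']
  exact potential_eq_of_schrodinger hn.ne' (hupos _) (hSchr _)

/-- Equation (3.5) of Theorem 1 along the trajectory: the
expression W defining the potential V satisfies
W(σ(t)) = (3/K²)(H² + H'/3 + 2k/(3a²)) + (n−6)D/(6aⁿ). -/
theorem potential_expression_along_trajectory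
    (n E k K : ℝ) (hn : 0 < n) (hK : 0 < K) (P u : ℝ → ℝ)
    (hu : Differentiable ℝ u) (hu' : Differentiable ℝ (deriv u))
    (hupos : ∀ x, 0 < u x)
    (hSchr : ∀ x, deriv (deriv u) x + (E - P x) * u x
      = -(n * k / 2) * u x ^ ((4 - n) / n))
    (t₁ t₂ : ℝ) (σ : ℝ → ℝ)
    (hσ : ∀ t ∈ Set.Ioo t₁ t₂, DifferentiableAt ℝ σ t)
    (hσ' : ∀ t ∈ Set.Ioo t₁ t₂, deriv σ t = u (σ t))
    (W a H : ℝ → ℝ) (D : ℝ)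
    (hW : W = fun x => 12 / (K ^ 2 * n ^ 2) * (deriv u x) ^ 2
      - 2 / (K ^ 2 * n) * u x ^ 2 * P x
      + 12 * E / (K ^ 2 * n ^ 2) * u x ^ 2
      + 3 * k / K ^ 2 * u x ^ (4 / n))
    (ha : a = fun t => u (σ t) ^ (-2 / n))
    (hH : H = fun t => deriv a t / a t)
    (hD : D = -12 * E / (n ^ 2 * K ^ 2)) :
    ∀ t ∈ Set.Ioo t₁ t₂,
      W (σ t) = 3 / K ^ 2 * (H t ^ 2 + deriv H t / 3 + 2 * k / (3 * a t ^ 2))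
        + (n - 6) * D / (6 * a t ^ n) :=
  potential_expression_along_trajectory_general n E k K hn P u hu hu' hupos hSchr t₁ t₂ σ hσ hσ' W a
    H D hW ha hH hD
end

section
/- (Theorem 1, forward direction.) Let n > 0, E ∈ ℝ, k ∈ ℝ, K > 0, and let P, u : ℝ → ℝ with u twice differentiable, u > 0, satisfying u''(x) + (E − P(x)) u(x) = −(n k/2) u(x)^((4−n)/n) for all x. Let σ be differentiable on an open interval I with σ'(t) = u(σ(t)), and let ψ be differentiable with ψ'(x)² = (4/(n K²)) P(x) for all x. Set a(t) = u(σ(t))^(−2/n), φ(t) = ψ(σ(t)), v(t) = (12/(K² n²)) u'(σ(t))² − (2/(K² n)) u(σ(t))² P(σ(t)) + (12 E/(K² n²)) u(σ(t))² + (3k/K²) u(σ(t))^(4/n), D = −12E/(n² K²), H(t) = a'(t)/a(t), ρ_T(t) = φ'(t)²/2 + v(t) + D/a(t)^n, p_T(t) = φ'(t)²/2 − v(t) + (n−3)D/(3 a(t)^n). Then for all t ∈ I both Einstein equations hold: H(t)² + k/a(t)² = (K²/3) ρ_T(t) and a''(t)/a(t) = −(K²/6)(ρ_T(t) + 3 p_T(t)).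 -/
/-!
Write `w = u ∘ σ`. Since `σ' = w`, differentiating along `σ` multiplies `x`-derivatives by `w`;
hence `a = w ^ (-2/n)` has `H = -(2/n) u'(σ)`, `φ' = ψ'(σ) w`, `1/a² = w ^ (4/n)` and `1/aⁿ = w²`.
The Friedmann equation then becomes an identity in `u(σ)`, `u'(σ)`, `P(σ)`, and the acceleration
equation becomes one after eliminating `u''(σ)` with the Schrödinger equation.
-/

open Filter Topology

section Flow

variable {u σ : ℝ → ℝ} {t : ℝ}

theorem hasDerivAt_rpow_of_flow (p : ℝ) (hu : DifferentiableAt ℝ u (σ t)) (hpos : 0 < u (σ t))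
    (hσ : HasDerivAt σ (u (σ t)) t) :
    HasDerivAt (fun s => u (σ s) ^ p) (p * deriv u (σ t) * u (σ t) ^ p) t := by
  have h := (Real.hasDerivAt_rpow_const (p := p) (Or.inl hpos.ne')).comp t
    (hu.hasDerivAt.comp t hσ)
  refine h.congr_deriv ?_
  rw [Real.rpow_sub_one hpos.ne']
  field_simp

theorem deriv_deriv_rpow_of_flow (p : ℝ) (hu : Differentiable ℝ u)
    (hu' : DifferentiableAt ℝ (deriv u) (σ t)) (hpos : ∀ x, 0 < u x)
    (hσ : ∀ᶠ s in 𝓝 t, HasDerivAt σ (u (σ s)) s) :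
    deriv (deriv fun s => u (σ s) ^ p) t
      = p * (deriv (deriv u) (σ t) * u (σ t) + p * deriv u (σ t) ^ 2) * u (σ t) ^ p := by
  have hderiv : deriv (fun s => u (σ s) ^ p) =ᶠ[𝓝 t] fun s => p * deriv u (σ s) * u (σ s) ^ p :=
    hσ.mono fun s hs => (hasDerivAt_rpow_of_flow p (hu _) (hpos _) hs).deriv
  have hσt := hσ.self_of_nhds
  have h := ((hu'.hasDerivAt.comp t hσt).const_mul p).mul
    (hasDerivAt_rpow_of_flow p (hu _) (hpos _) hσt)
  rw [hderiv.deriv_eq]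
  refine (h.congr_deriv ?_).deriv
  simp only [Function.comp_apply]
  ring

end Flow

theorem rpow_neg_two_div_sq {w : ℝ} (hw : 0 ≤ w) (n : ℝ) :
    (w ^ (-2 / n)) ^ 2 = (w ^ (4 / n))⁻¹ := by
  rw [← Real.rpow_mul_natCast hw, ← Real.rpow_neg hw]
  ring_nf

theorem rpow_neg_two_div_rpow_self {w n : ℝ} (hw : 0 ≤ w) (hn : n ≠ 0) :
    (w ^ (-2 / n)) ^ n = (w ^ 2)⁻¹ := by
  rw [← Real.rpow_mul hw, div_mul_cancel₀ _ hn, Real.rpow_neg hw]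
  norm_cast

/-- Theorem 1, forward direction: from a positive solution u of the
non-linear Schrödinger-type equation one constructs (a, φ, V) solving both
Einstein equations. -/
theorem schrodinger_to_einstein
    (n E k K : ℝ) (hn : 0 < n) (hK : 0 < K) (P u : ℝ → ℝ)
    (hu : Differentiable ℝ u) (hu' : Differentiable ℝ (deriv u))
    (hupos : ∀ x, 0 < u x)
    (hSchr : ∀ x, deriv (deriv u) x + (E - P x) * u x
      = -(n * k / 2) * u x ^ ((4 - n) / n))
    (t₁ t₂ : ℝ) (σ : ℝ → ℝ)
    (hσ : ∀ t ∈ Set.Ioo t₁ t₂, DifferentiableAt ℝ σ t)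
    (hσ' : ∀ t ∈ Set.Ioo t₁ t₂, deriv σ t = u (σ t))
    (ψ : ℝ → ℝ) (hψ : Differentiable ℝ ψ)
    (hψ' : ∀ x, (deriv ψ x) ^ 2 = 4 / (n * K ^ 2) * P x)
    (a φ v H ρT pT : ℝ → ℝ) (D : ℝ)
    (ha : a = fun t => u (σ t) ^ (-2 / n))
    (hφ : φ = fun t => ψ (σ t))
    (hv : v = fun t => 12 / (K ^ 2 * n ^ 2) * (deriv u (σ t)) ^ 2
      - 2 / (K ^ 2 * n) * u (σ t) ^ 2 * P (σ t)
      + 12 * E / (K ^ 2 * n ^ 2) * u (σ t) ^ 2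
      + 3 * k / K ^ 2 * u (σ t) ^ (4 / n))
    (hD : D = -12 * E / (n ^ 2 * K ^ 2))
    (hH : H = fun t => deriv a t / a t)
    (hρ : ρT = fun t => (deriv φ t) ^ 2 / 2 + v t + D / a t ^ n)
    (hp : pT = fun t => (deriv φ t) ^ 2 / 2 - v t + (n - 3) * D / (3 * a t ^ n)) :
    ∀ t ∈ Set.Ioo t₁ t₂,
      H t ^ 2 + k / a t ^ 2 = K ^ 2 / 3 * ρT t ∧
      deriv (deriv a) t / a t = -(K ^ 2 / 6) * (ρT t + 3 * pT t) := by
  have hflow : ∀ t ∈ Set.Ioo t₁ t₂, HasDerivAt σ (u (σ t)) t := fun t ht =>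
    hσ' t ht ▸ (hσ t ht).hasDerivAt
  intro t ht
  have hw := hupos (σ t)
  have ha' := (hasDerivAt_rpow_of_flow (-2 / n) (hu _) hw (hflow t ht)).deriv
  have ha'' := deriv_deriv_rpow_of_flow (-2 / n) hu (hu' _) hupos
    (eventually_of_mem (Ioo_mem_nhds ht.1 ht.2) hflow)
  have hφ' : deriv (fun s => ψ (σ s)) t = deriv ψ (σ t) * u (σ t) :=
    ((hψ (σ t)).hasDerivAt.comp t (hflow t ht)).deriv
  have hu'' : deriv (deriv u) (σ t)
      = -(n * k / 2) * (u (σ t) ^ (4 / n) / u (σ t)) - (E - P (σ t)) * u (σ t) := by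
    rw [← Real.rpow_sub_one hw.ne', show 4 / n - 1 = (4 - n) / n by field_simp, ← hSchr]
    ring
  subst ha hφ hv hD hH hρ hp
  simp only [ha', ha'', hu'', hφ', mul_pow, hψ', rpow_neg_two_div_sq hw.le,
    rpow_neg_two_div_rpow_self hw.le hn.ne']
  constructor <;> field_simp <;> ring
end

section
/- (Theorem 1, converse direction.) Let n > 0, k ∈ ℝ, K > 0, D ∈ ℝ. Let a, φ : ℝ → ℝ be twice differentiable on an open interval I with a > 0 on I, let v : ℝ → ℝ be a function, set H(t) = a'(t)/a(t), ρ_T(t) = φ'(t)²/2 + v(t) + D/a(t)^n, p_T(t) = φ'(t)²/2 − v(t) + (n−3)D/(3 a(t)^n), and assume for all t ∈ I: H(t)² + k/a(t)² = (K²/3) ρ_T(t) and a''(t)/a(t) = −(K²/6)(ρ_T(t) + 3 p_T(t)). Let σ be differentiable on I with σ'(t) = a(t)^(−n/2), let J be an open interval and g : ℝ → ℝ twice differentiable on J with g(J) ⊆ I and σ(g(x)) = x for all x ∈ J. Define E = −K² n² D/12, P(x) = (n K²/4) · a(g(x))^n · φ'(g(x))², and u(x) = a(g(x))^(−n/2).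 Then for all x ∈ J: u''(x) + (E − P(x)) u(x) = −(n k/2) u(x)^((4−n)/n). -/
/-!
With `u = a(g)^(-n/2)` and `g' = 1/σ'(g) = a(g)^(n/2)`, one gets `u' = -(n/2) H(g)` and
`u'' = -(n/2) (a''/a - H²)(g) · a(g)^(n/2)`. Subtracting the Friedmann equation from the
acceleration equation gives `a''/a - H² = k/a² - (K²/2)(ρ_T + p_T)`, where
`ρ_T + p_T = φ'² + nD/(3aⁿ)`: the `φ'²` term produces `P u`, the `D` term produces `-E u`, and
what is left is `-(nk/2) a^(n/2 - 2) = -(nk/2) u^((4-n)/n)`.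
-/

open Filter Topology Set

lemma HasDerivAt.of_local_left_inverse_rpow {σ g : ℝ → ℝ} {c m x : ℝ} (hc : 0 < c)
    (hg : ContinuousAt g x) (hσ : HasDerivAt σ (c ^ (-m)) (g x))
    (hinv : ∀ᶠ y in 𝓝 x, σ (g y) = y) : HasDerivAt g (c ^ m) x := by
  simpa [Real.rpow_neg hc.le] using hσ.of_local_left_inverse hg (by positivity) hinv

section RpowComp

variable {a g : ℝ → ℝ} {m x : ℝ}

lemma hasDerivAt_rpow_neg_comp {a' : ℝ} (hg : HasDerivAt g (a (g x) ^ m) x)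
    (ha : HasDerivAt a a' (g x)) (hpos : 0 < a (g x)) :
    HasDerivAt (fun y => a (g y) ^ (-m)) (-m * (a' / a (g x))) x := by
  refine ((Real.hasDerivAt_rpow_const (p := -m) (Or.inl hpos.ne')).comp x
    (ha.comp x hg)).congr_deriv ?_
  have hpow : a (g x) ^ (-m - 1) * a (g x) ^ m = (a (g x))⁻¹ := by
    rw [← Real.rpow_add hpos, show -m - 1 + m = -1 by ring, Real.rpow_neg_one]
  linear_combination -m * a' * hpow

lemma hasDerivAt_deriv_rpow_neg_comp (hg : ∀ᶠ y in 𝓝 x, HasDerivAt g (a (g y) ^ m) y)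
    (ha : ∀ᶠ y in 𝓝 x, DifferentiableAt ℝ a (g y)) (hpos : ∀ᶠ y in 𝓝 x, 0 < a (g y))
    (ha' : DifferentiableAt ℝ (deriv a) (g x)) :
    HasDerivAt (deriv fun y => a (g y) ^ (-m))
      (-m * (deriv (deriv a) (g x) / a (g x) - (deriv a (g x) / a (g x)) ^ 2) * a (g x) ^ m)
      x := by
  have hu' : deriv (fun y => a (g y) ^ (-m)) =ᶠ[𝓝 x]
      fun y => -m * (deriv a (g y) / a (g y)) := by
    filter_upwards [hg, ha, hpos] with y hgy hay hy
    exact (hasDerivAt_rpow_neg_comp hgy hay.hasDerivAt hy).deriv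
  obtain ⟨hgx, hax, hx⟩ := (hg.and (ha.and hpos)).self_of_nhds
  have hH := (ha'.hasDerivAt.comp x hgx).div (hax.hasDerivAt.comp x hgx) hx.ne'
  refine ((hH.const_mul (-m)).congr_of_eventuallyEq hu').congr_deriv ?_
  simp only [Function.comp_apply]
  field_simp

end RpowComp

lemma accel_sub_sq_hubble {H A A'' k K ρ p : ℝ}
    (hFried : H ^ 2 + k / A ^ 2 = K ^ 2 / 3 * ρ)
    (hAcc : A'' / A = -(K ^ 2 / 6) * (ρ + 3 * p)) :
    A'' / A - H ^ 2 = k / A ^ 2 - K ^ 2 / 2 * (ρ + p) := by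
  linear_combination hAcc - hFried

lemma schrodinger_identity {A F k K D n : ℝ} (hA : 0 < A) (hn : n ≠ 0) :
    -(n / 2) * (k / A ^ 2 - K ^ 2 / 2 * (F ^ 2 + n * D / (3 * A ^ n))) * A ^ (n / 2)
      + (-K ^ 2 * n ^ 2 * D / 12 - n * K ^ 2 / 4 * A ^ n * F ^ 2) * A ^ (-(n / 2))
      = -(n * k / 2) * (A ^ (-(n / 2))) ^ ((4 - n) / n) := by
  set X := A ^ (n / 2) with hX
  have hXpos : 0 < X := by positivity
  have hAn : A ^ n = X * X := by rw [hX, ← Real.rpow_add hA]; ring_nf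
  have hpow : (A ^ (-(n / 2))) ^ ((4 - n) / n) = X / A ^ 2 := by
    rw [← Real.rpow_mul hA.le, show -(n / 2) * ((4 - n) / n) = n / 2 - (2 : ℕ) by field_simp; ring,
      Real.rpow_sub hA, Real.rpow_natCast]
  rw [hpow, Real.rpow_neg hA.le, hAn]
  field_simp
  ring

theorem einstein_to_schrodinger_general
    (n k K D : ℝ) (hn : 0 < n)
    (t₁ t₂ x₁ x₂ : ℝ) (a φ v : ℝ → ℝ)
    (ha : ∀ t ∈ Set.Ioo t₁ t₂, DifferentiableAt ℝ a t)
    (ha' : ∀ t ∈ Set.Ioo t₁ t₂, DifferentiableAt ℝ (deriv a) t)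
    (hapos : ∀ t ∈ Set.Ioo t₁ t₂, 0 < a t)
    (H ρT pT : ℝ → ℝ)
    (hH : H = fun t => deriv a t / a t)
    (hρ : ρT = fun t => (deriv φ t) ^ 2 / 2 + v t + D / a t ^ n)
    (hp : pT = fun t => (deriv φ t) ^ 2 / 2 - v t + (n - 3) * D / (3 * a t ^ n))
    (hFried : ∀ t ∈ Set.Ioo t₁ t₂, H t ^ 2 + k / a t ^ 2 = K ^ 2 / 3 * ρT t)
    (hAcc : ∀ t ∈ Set.Ioo t₁ t₂,
      deriv (deriv a) t / a t = -(K ^ 2 / 6) * (ρT t + 3 * pT t))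
    (σ g : ℝ → ℝ)
    (hσ : ∀ t ∈ Set.Ioo t₁ t₂, DifferentiableAt ℝ σ t)
    (hσ' : ∀ t ∈ Set.Ioo t₁ t₂, deriv σ t = a t ^ (-(n / 2)))
    (hg : ∀ x ∈ Set.Ioo x₁ x₂, DifferentiableAt ℝ g x)
    (hgJ : ∀ x ∈ Set.Ioo x₁ x₂, g x ∈ Set.Ioo t₁ t₂)
    (hinv : ∀ x ∈ Set.Ioo x₁ x₂, σ (g x) = x)
    (E : ℝ) (P u : ℝ → ℝ)
    (hE : E = -K ^ 2 * n ^ 2 * D / 12)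
    (hP : P = fun x => n * K ^ 2 / 4 * a (g x) ^ n * (deriv φ (g x)) ^ 2)
    (hu : u = fun x => a (g x) ^ (-(n / 2))) :
    ∀ x ∈ Set.Ioo x₁ x₂,
      deriv (deriv u) x + (E - P x) * u x
        = -(n * k / 2) * u x ^ ((4 - n) / n) := by
  intro x hx
  subst hH hρ hp hE hP hu
  have ht := hgJ x hx
  have hJ : ∀ᶠ y in 𝓝 x, y ∈ Ioo x₁ x₂ := Ioo_mem_nhds hx.1 hx.2
  have hg_deriv : ∀ᶠ y in 𝓝 x, HasDerivAt g (a (g y) ^ (n / 2)) y := by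
    filter_upwards [hJ] with y hy
    have hσy := (hσ _ (hgJ y hy)).hasDerivAt
    rw [hσ' _ (hgJ y hy)] at hσy
    exact hσy.of_local_left_inverse_rpow (hapos _ (hgJ y hy)) (hg y hy).continuousAt
      (mem_of_superset (Ioo_mem_nhds hy.1 hy.2) hinv)
  have hu'' := hasDerivAt_deriv_rpow_neg_comp hg_deriv
    (hJ.mono fun y hy => ha _ (hgJ y hy)) (hJ.mono fun y hy => hapos _ (hgJ y hy)) (ha' _ ht)
  have hρp : deriv φ (g x) ^ 2 / 2 + v (g x) + D / a (g x) ^ n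
      + (deriv φ (g x) ^ 2 / 2 - v (g x) + (n - 3) * D / (3 * a (g x) ^ n))
      = deriv φ (g x) ^ 2 + n * D / (3 * a (g x) ^ n) := by
    ring
  rw [hu''.deriv, accel_sub_sq_hubble (hFried _ ht) (hAcc _ ht), hρp]
  exact schrodinger_identity (hapos _ ht) hn.ne'

/-- Theorem 1, converse direction: from a solution (a, φ, V) of the
Einstein equations one obtains a solution u of the non-linear Schrödinger-type
equation. -/
theorem einstein_to_schrodinger
    (n k K D : ℝ) (hn : 0 < n) (hK : 0 < K)
    (t₁ t₂ x₁ x₂ : ℝ) (a φ v : ℝ → ℝ)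
    (ha : ∀ t ∈ Set.Ioo t₁ t₂, DifferentiableAt ℝ a t)
    (ha' : ∀ t ∈ Set.Ioo t₁ t₂, DifferentiableAt ℝ (deriv a) t)
    (hφ : ∀ t ∈ Set.Ioo t₁ t₂, DifferentiableAt ℝ φ t)
    (hφ' : ∀ t ∈ Set.Ioo t₁ t₂, DifferentiableAt ℝ (deriv φ) t)
    (hapos : ∀ t ∈ Set.Ioo t₁ t₂, 0 < a t)
    (H ρT pT : ℝ → ℝ)
    (hH : H = fun t => deriv a t / a t)
    (hρ : ρT = fun t => (deriv φ t) ^ 2 / 2 + v t + D / a t ^ n)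
    (hp : pT = fun t => (deriv φ t) ^ 2 / 2 - v t + (n - 3) * D / (3 * a t ^ n))
    (hFried : ∀ t ∈ Set.Ioo t₁ t₂, H t ^ 2 + k / a t ^ 2 = K ^ 2 / 3 * ρT t)
    (hAcc : ∀ t ∈ Set.Ioo t₁ t₂,
      deriv (deriv a) t / a t = -(K ^ 2 / 6) * (ρT t + 3 * pT t))
    (σ g : ℝ → ℝ)
    (hσ : ∀ t ∈ Set.Ioo t₁ t₂, DifferentiableAt ℝ σ t)
    (hσ' : ∀ t ∈ Set.Ioo t₁ t₂, deriv σ t = a t ^ (-(n / 2)))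
    (hg : ∀ x ∈ Set.Ioo x₁ x₂, DifferentiableAt ℝ g x)
    (hg' : ∀ x ∈ Set.Ioo x₁ x₂, DifferentiableAt ℝ (deriv g) x)
    (hgJ : ∀ x ∈ Set.Ioo x₁ x₂, g x ∈ Set.Ioo t₁ t₂)
    (hinv : ∀ x ∈ Set.Ioo x₁ x₂, σ (g x) = x)
    (E : ℝ) (P u : ℝ → ℝ)
    (hE : E = -K ^ 2 * n ^ 2 * D / 12)
    (hP : P = fun x => n * K ^ 2 / 4 * a (g x) ^ n * (deriv φ (g x)) ^ 2)
    (hu : u = fun x => a (g x) ^ (-(n / 2))) :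
    ∀ x ∈ Set.Ioo x₁ x₂,
      deriv (deriv u) x + (E - P x) * u x
        = -(n * k / 2) * u x ^ ((4 - n) / n) :=
  einstein_to_schrodinger_general n k K D hn t₁ t₂ x₁ x₂ a φ v ha ha' hapos H ρT pT hH hρ hp hFried
    hAcc σ g hσ hσ' hg hgJ hinv E P u hE hP hu
end

section
/- Let n > 0, E ∈ ℝ, k ∈ ℝ, K > 0, and let u : ℝ → ℝ be twice differentiable, u > 0, satisfying the zero-potential Schrödinger-type equation u''(x) + E u(x) = −(n k/2) u(x)^((4−n)/n) for all x. Let σ be differentiable on an open interval I with σ'(t) = u(σ(t)). Define a(t) = u(σ(t))^(−2/n), H(t) = a'(t)/a(t), D = −12E/(n² K²). Then for all t ∈ I: 0 = −(2/K²) H'(t) − (n D/3) a(t)^(−n) + (2k/K²) a(t)^(−2). -/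
/-- Equation (3.14) of Remark 1 (case P = 0): the zero-potential
Schrödinger-type equation yields 0 = −(2/K²)H' − (nD/3)a^(−n) + (2k/K²)a^(−2). -/
theorem zero_potential_constraint
    (n E k K : ℝ) (hn : 0 < n) (hK : 0 < K) (u : ℝ → ℝ)
    (hu : Differentiable ℝ u) (hu' : Differentiable ℝ (deriv u))
    (hupos : ∀ x, 0 < u x)
    (hSchr : ∀ x, deriv (deriv u) x + E * u x
      = -(n * k / 2) * u x ^ ((4 - n) / n))
    (t₁ t₂ : ℝ) (σ : ℝ → ℝ)
    (hσ : ∀ t ∈ Set.Ioo t₁ t₂, DifferentiableAt ℝ σ t)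
    (hσ' : ∀ t ∈ Set.Ioo t₁ t₂, deriv σ t = u (σ t))
    (a H : ℝ → ℝ) (D : ℝ)
    (ha : a = fun t => u (σ t) ^ (-2 / n))
    (hH : H = fun t => deriv a t / a t)
    (hD : D = -12 * E / (n ^ 2 * K ^ 2)) :
    ∀ t ∈ Set.Ioo t₁ t₂,
      0 = -(2 / K ^ 2) * deriv H t - n * D / 3 * a t ^ (-n)
        + 2 * k / K ^ 2 * a t ^ (-2 : ℝ) := by
  subst ha hH hD
  intro t ht
  have hn' : n ≠ 0 := hn.ne'
  have hK2 : K ^ 2 ≠ 0 := pow_ne_zero 2 hK.ne'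
  have hσd : ∀ τ ∈ Set.Ioo t₁ t₂, HasDerivAt σ (u (σ τ)) τ := by
    intro τ hτ
    have := (hσ τ hτ).hasDerivAt
    rwa [hσ' τ hτ] at this
  have hv : ∀ τ ∈ Set.Ioo t₁ t₂,
      HasDerivAt (fun t => u (σ t)) (deriv u (σ τ) * u (σ τ)) τ := by
    intro τ hτ
    exact ((hu (σ τ)).hasDerivAt).comp τ (hσd τ hτ)
  have ha' : ∀ τ ∈ Set.Ioo t₁ t₂,
      HasDerivAt (fun t => u (σ t) ^ (-2 / n))
        ((deriv u (σ τ) * u (σ τ)) * (-2 / n) * u (σ τ) ^ (-2 / n - 1)) τ := by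
    intro τ hτ
    exact (hv τ hτ).rpow_const (Or.inl (hupos _).ne')
  have hHeq : ∀ τ ∈ Set.Ioo t₁ t₂,
      deriv (fun t => u (σ t) ^ (-2 / n)) τ / u (σ τ) ^ (-2 / n)
        = -2 / n * deriv u (σ τ) := by
    intro τ hτ
    rw [(ha' τ hτ).deriv]
    have hvp : 0 < u (σ τ) := hupos _
    have h2 : u (σ τ) ^ (-2 / n - 1) = u (σ τ) ^ (-2 / n) / u (σ τ) :=
      Real.rpow_sub_one hvp.ne' _
    have hne : u (σ τ) ^ (-2 / n) ≠ 0 := (Real.rpow_pos_of_pos hvp _).ne'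
    rw [h2]
    field_simp
  have hev : (fun τ => deriv (fun t => u (σ t) ^ (-2 / n)) τ / u (σ τ) ^ (-2 / n))
      =ᶠ[nhds t] fun τ => -2 / n * deriv u (σ τ) := by
    filter_upwards [isOpen_Ioo.mem_nhds ht] with τ hτ using hHeq τ hτ
  have hg : HasDerivAt (fun τ => -2 / n * deriv u (σ τ))
      (-2 / n * (deriv (deriv u) (σ t) * u (σ t))) t :=
    (((hu' (σ t)).hasDerivAt).comp t (hσd t ht)).const_mul (-2 / n)
  have hderivH : deriv (fun τ => deriv (fun t => u (σ t) ^ (-2 / n)) τ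
      / u (σ τ) ^ (-2 / n)) t = -2 / n * (deriv (deriv u) (σ t) * u (σ t)) := by
    rw [hev.deriv_eq, hg.deriv]
  rw [hderivH]
  have hvp : 0 < u (σ t) := hupos (σ t)
  have hschr : deriv (deriv u) (σ t)
      = -(n * k / 2) * u (σ t) ^ ((4 - n) / n) - E * u (σ t) := by
    have := hSchr (σ t); linarith
  rw [hschr]
  have e2 : (u (σ t) ^ (-2 / n)) ^ (-n) = u (σ t) ^ (2 : ℝ) := by
    rw [← Real.rpow_mul hvp.le]
    congr 1
    field_simp
  have e3 : (u (σ t) ^ (-2 / n)) ^ (-2 : ℝ) = u (σ t) ^ ((4 : ℝ) / n) := by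
    rw [← Real.rpow_mul hvp.le]
    congr 1
    field_simp
    norm_num
  have e1 : u (σ t) ^ ((4 - n) / n) = u (σ t) ^ ((4 : ℝ) / n) / u (σ t) := by
    rw [← Real.rpow_sub_one hvp.ne']
    congr 1
    field_simp
  have e4 : u (σ t) ^ (2 : ℝ) = u (σ t) * u (σ t) := by
    rw [Real.rpow_two]; ring
  rw [e2, e3, e1, e4]
  field_simp
  ring
end

section
/- Let K > 0, k ∈ ℝ, n > 0, D ∈ ℝ, and let a : ℝ → ℝ be three times differentiable on an open interval I with a > 0 on I. Define H(t) = a'(t)/a(t). Assume for all t ∈ I: 0 = −(2/K²) H'(t) − (n D/3) a(t)^(−n) + (2k/K²) a(t)^(−2). Then for all t ∈ I: H''(t) = (−2k/a(t)² + K² n² D/(6 a(t)^n)) · H(t). -/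
/-! Since `H = a'/a`, the derivative of `a ^ p` is `p a ^ p H`. The constraint says
`H' = k a⁻² - (K² n D / 6) a⁻ⁿ` on the whole interval, so differentiating it once more
multiplies each power of `a` by its exponent times `H`, which is the formula for `H''`. -/

open Filter

lemma HasDerivAt.rpow_const_of_pos {f : ℝ → ℝ} {f' x : ℝ} (p : ℝ) (hf : HasDerivAt f f' x)
    (hx : 0 < f x) : HasDerivAt (fun y => f y ^ p) (p * f x ^ p * (f' / f x)) x := by
  convert hf.rpow_const (p := p) (Or.inl hx.ne') using 1
  rw [Real.rpow_sub hx, Real.rpow_one]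
  field_simp

lemma eq_sub_of_constraint {K k n D x y z : ℝ} (hK : K ≠ 0)
    (h : 0 = -(2 / K ^ 2) * x - n * D / 3 * y + 2 * k / K ^ 2 * z) :
    x = k * z - K ^ 2 * n * D / 6 * y := by
  field_simp at h
  linear_combination (1 / 6 : ℝ) * h

theorem constraint_implies_Hpp_general
    (K k n D : ℝ) (hK : 0 < K)
    (t₁ t₂ : ℝ) (a : ℝ → ℝ)
    (ha : ∀ t ∈ Set.Ioo t₁ t₂, DifferentiableAt ℝ a t)
    (hapos : ∀ t ∈ Set.Ioo t₁ t₂, 0 < a t)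
    (H : ℝ → ℝ) (hH : H = fun t => deriv a t / a t)
    (h314 : ∀ t ∈ Set.Ioo t₁ t₂,
      0 = -(2 / K ^ 2) * deriv H t - n * D / 3 * a t ^ (-n)
        + 2 * k / K ^ 2 * a t ^ (-2 : ℝ)) :
    ∀ t ∈ Set.Ioo t₁ t₂,
      deriv (deriv H) t
        = (-2 * k / a t ^ 2 + K ^ 2 * n ^ 2 * D / (6 * a t ^ n)) * H t := by
  intro t ht
  have hderivH : deriv H =ᶠ[nhds t]
      fun s => k * a s ^ (-2 : ℝ) - K ^ 2 * n * D / 6 * a s ^ (-n) :=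
    eventuallyEq_of_mem (isOpen_Ioo.mem_nhds ht)
      fun s hs => eq_sub_of_constraint hK.ne' (h314 s hs)
  have hpos := hapos t ht
  have hHt : deriv a t / a t = H t := by rw [hH]
  have hpow (p : ℝ) : HasDerivAt (fun s => a s ^ p) (p * a t ^ p * H t) t :=
    hHt ▸ (ha t ht).hasDerivAt.rpow_const_of_pos p hpos
  have hderiv2H : HasDerivAt (fun s => k * a s ^ (-2 : ℝ) - K ^ 2 * n * D / 6 * a s ^ (-n))
      (k * (-2 * a t ^ (-2 : ℝ) * H t) - K ^ 2 * n * D / 6 * (-n * a t ^ (-n) * H t)) t :=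
    ((hpow _).const_mul k).sub ((hpow _).const_mul _)
  rw [hderivH.deriv_eq, hderiv2H.deriv, Real.rpow_neg hpos.le, Real.rpow_neg hpos.le,
    Real.rpow_two]
  field_simp
  ring

/-- Equation (3.14) implies equation (3.15):
H'' = (−2k/a² + K²n²D/(6aⁿ))·H. -/
theorem constraint_implies_Hpp
    (K k n D : ℝ) (hK : 0 < K) (hn : 0 < n)
    (t₁ t₂ : ℝ) (a : ℝ → ℝ)
    (ha : ∀ t ∈ Set.Ioo t₁ t₂, DifferentiableAt ℝ a t)
    (ha' : ∀ t ∈ Set.Ioo t₁ t₂, DifferentiableAt ℝ (deriv a) t)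
    (ha'' : ∀ t ∈ Set.Ioo t₁ t₂, DifferentiableAt ℝ (deriv (deriv a)) t)
    (hapos : ∀ t ∈ Set.Ioo t₁ t₂, 0 < a t)
    (H : ℝ → ℝ) (hH : H = fun t => deriv a t / a t)
    (h314 : ∀ t ∈ Set.Ioo t₁ t₂,
      0 = -(2 / K ^ 2) * deriv H t - n * D / 3 * a t ^ (-n)
        + 2 * k / K ^ 2 * a t ^ (-2 : ℝ)) :
    ∀ t ∈ Set.Ioo t₁ t₂,
      deriv (deriv H) t
        = (-2 * k / a t ^ 2 + K ^ 2 * n ^ 2 * D / (6 * a t ^ n)) * H t :=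
  constraint_implies_Hpp_general K k n D hK t₁ t₂ a ha hapos H hH h314
end

section
/- Let K > 0, k ∈ ℝ, n > 0, D ∈ ℝ, and let a : ℝ → ℝ be three times differentiable on an open interval I with a > 0 on I. Define H(t) = a'(t)/a(t). Assume for all t ∈ I: 0 = −(2/K²) H'(t) − (n D/3) a(t)^(−n) + (2k/K²) a(t)^(−2). Then the function F(t) = (3/K²)(H(t)² + H'(t)/3 + 2k/(3 a(t)²)) + (n−6) D/(6 a(t)^n) has derivative zero on I; in particular there is a constant V₀ with F(t) = V₀ for all t ∈ I. -/
/-!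
Read the paper's expressions through the scalar field `φ`: the Friedmann equation gives its
density `ρ_φ = (3/K²)(H² + k/a²) - D a⁻ⁿ`, the Raychaudhuri equation gives `φ'² = ρ_φ + p_φ`,
which is the right-hand side of (3.14), and (3.16) is `V = ρ_φ - φ'²/2`. These are identities
in `a` and `H = a'/a` alone, as is the continuity equation `ρ_φ' = -3H φ'²`. Under (3.14)
the kinetic term vanishes on `I`, so there `V = ρ_φ` and `ρ_φ' = 0`.
-/

open Set Filter

theorem HasDerivAt.rpow_const_of_eq_mul {a : ℝ → ℝ} {p h t : ℝ} (hne : a t ≠ 0)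
    (ha : HasDerivAt a (h * a t) t) :
    HasDerivAt (fun s => a s ^ p) (p * h * a t ^ p) t := by
  convert ha.rpow_const (p := p) (Or.inl hne) using 1
  rw [Real.rpow_sub_one hne]
  field_simp

namespace FLRW

variable (K k n D : ℝ) (a H : ℝ → ℝ)

noncomputable def scalarDensity (t : ℝ) : ℝ :=
  3 / K ^ 2 * H t ^ 2 + 3 * k / K ^ 2 * a t ^ (-2 : ℝ) - D * a t ^ (-n)

noncomputable def scalarKinetic (t : ℝ) : ℝ :=
  -(2 / K ^ 2) * deriv H t - n * D / 3 * a t ^ (-n) + 2 * k / K ^ 2 * a t ^ (-2 : ℝ)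

variable {K k n D a H}

theorem potential_eq_scalarDensity_sub_scalarKinetic {t : ℝ} (hpos : 0 < a t) :
    3 / K ^ 2 * (H t ^ 2 + deriv H t / 3 + 2 * k / (3 * a t ^ 2))
      + (n - 6) * D / (6 * a t ^ n)
      = scalarDensity K k n D a H t - scalarKinetic K k n D a H t / 2 := by
  have h2 : a t ^ (-2 : ℝ) = (a t ^ 2)⁻¹ := by
    rw [Real.rpow_neg hpos.le, Real.rpow_two]
  simp only [scalarDensity, scalarKinetic]
  rw [h2, Real.rpow_neg hpos.le]
  ring

/-- The continuity equation `ρ_φ' = -3H(ρ_φ + p_φ)`. -/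
theorem hasDerivAt_scalarDensity {t : ℝ} (hpos : 0 < a t)
    (ha : HasDerivAt a (H t * a t) t) (hH : DifferentiableAt ℝ H t) :
    HasDerivAt (scalarDensity K k n D a H) (-3 * H t * scalarKinetic K k n D a H t) t := by
  have hsq := (hH.hasDerivAt.pow 2).const_mul (3 / K ^ 2)
  have hcurv := (ha.rpow_const_of_eq_mul (p := -2) hpos.ne').const_mul (3 * k / K ^ 2)
  have hmatter := (ha.rpow_const_of_eq_mul (p := -n) hpos.ne').const_mul D
  refine ((hsq.add hcurv).sub hmatter).congr_deriv ?_
  simp only [scalarKinetic]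
  push_cast
  ring

end FLRW

open FLRW in
theorem constraint_implies_constant_potential_general
    (K k n D : ℝ)
    (t₁ t₂ : ℝ) (a : ℝ → ℝ)
    (ha : ∀ t ∈ Set.Ioo t₁ t₂, DifferentiableAt ℝ a t)
    (ha' : ∀ t ∈ Set.Ioo t₁ t₂, DifferentiableAt ℝ (deriv a) t)
    (hapos : ∀ t ∈ Set.Ioo t₁ t₂, 0 < a t)
    (H F : ℝ → ℝ)
    (hH : H = fun t => deriv a t / a t)
    (hF : F = fun t => 3 / K ^ 2 * (H t ^ 2 + deriv H t / 3 + 2 * k / (3 * a t ^ 2))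
      + (n - 6) * D / (6 * a t ^ n))
    (h314 : ∀ t ∈ Set.Ioo t₁ t₂,
      0 = -(2 / K ^ 2) * deriv H t - n * D / 3 * a t ^ (-n)
        + 2 * k / K ^ 2 * a t ^ (-2 : ℝ)) :
    (∀ t ∈ Set.Ioo t₁ t₂, deriv F t = 0) ∧
    (∃ V₀ : ℝ, ∀ t ∈ Set.Ioo t₁ t₂, F t = V₀) := by
  have hkin : ∀ t ∈ Ioo t₁ t₂, scalarKinetic K k n D a H t = 0 := fun t ht => (h314 t ht).symm
  have hFρ : EqOn F (scalarDensity K k n D a H) (Ioo t₁ t₂) := fun t ht => by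
    simp only [hF]
    rw [potential_eq_scalarDensity_sub_scalarKinetic (hapos t ht), hkin t ht, zero_div, sub_zero]
  have hF' : ∀ t ∈ Ioo t₁ t₂, HasDerivAt F 0 t := fun t ht => by
    have hne := (hapos t ht).ne'
    have haH : HasDerivAt a (H t * a t) t := by
      rw [hH, div_mul_cancel₀ _ hne]
      exact (ha t ht).hasDerivAt
    have hHd : DifferentiableAt ℝ H t := hH ▸ (ha' t ht).div (ha t ht) hne
    have hρ : HasDerivAt (scalarDensity K k n D a H) 0 t :=
      (hasDerivAt_scalarDensity (hapos t ht) haH hHd).congr_deriv (by rw [hkin t ht, mul_zero])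
    exact hρ.congr_of_eventuallyEq (eventually_of_mem (isOpen_Ioo.mem_nhds ht) hFρ)
  refine ⟨fun t ht => (hF' t ht).deriv, ?_⟩
  exact isOpen_Ioo.exists_is_const_of_deriv_eq_zero isPreconnected_Ioo
    (fun t ht => (hF' t ht).differentiableAt.differentiableWithinAt)
    (fun t ht => (hF' t ht).deriv)

/-- Equation (3.14) implies that the potential expression (3.16)
is constant: F' = 0 on I and F ≡ V₀ for some constant V₀. -/
theorem constraint_implies_constant_potential
    (K k n D : ℝ) (hK : 0 < K) (hn : 0 < n)
    (t₁ t₂ : ℝ) (a : ℝ → ℝ)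
    (ha : ∀ t ∈ Set.Ioo t₁ t₂, DifferentiableAt ℝ a t)
    (ha' : ∀ t ∈ Set.Ioo t₁ t₂, DifferentiableAt ℝ (deriv a) t)
    (ha'' : ∀ t ∈ Set.Ioo t₁ t₂, DifferentiableAt ℝ (deriv (deriv a)) t)
    (hapos : ∀ t ∈ Set.Ioo t₁ t₂, 0 < a t)
    (H F : ℝ → ℝ)
    (hH : H = fun t => deriv a t / a t)
    (hF : F = fun t => 3 / K ^ 2 * (H t ^ 2 + deriv H t / 3 + 2 * k / (3 * a t ^ 2))
      + (n - 6) * D / (6 * a t ^ n))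
    (h314 : ∀ t ∈ Set.Ioo t₁ t₂,
      0 = -(2 / K ^ 2) * deriv H t - n * D / 3 * a t ^ (-n)
        + 2 * k / K ^ 2 * a t ^ (-2 : ℝ)) :
    (∀ t ∈ Set.Ioo t₁ t₂, deriv F t = 0) ∧
    (∃ V₀ : ℝ, ∀ t ∈ Set.Ioo t₁ t₂, F t = V₀) :=
  constraint_implies_constant_potential_general K k n D t₁ t₂ a ha ha' hapos H F hH hF h314
end

section
/- Let A > 0, ω > 0, K > 0 with A²ω² < 1, and set u(x) = (1 − A⁴ω²x²)/A² and P(x) = 2A²(1 − A²ω²)/(1 − A⁴ω²x²). Then: (1) for all x with |x| < 1/(A²ω), u''(x) − P(x) u(x) = −2 (i.e., u solves the Schrödinger-type equation u'' + (E − P)u = −(nk/2)u^((4−n)/n) with E = 0, n = 4, k = 1); and (2) the function σ(t) = tanh(ωt)/(A²ω) satisfies σ'(t) = u(σ(t)) for all t ∈ ℝ, and u(σ(t)) = (A cosh(ωt))^(−2). -/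
open Real

/-!
The profile `u` is an even quadratic, so `u''` is constant, and the potential `P` is built so
that `P · u` is constant as well; the equation is then one line of algebra. Along
`σ(t) = tanh(ωt)/(A²ω)` the identity `1 - tanh² = cosh⁻²` turns both `σ'(t)` and `u(σ(t))`
into `(A cosh(ωt))⁻²`.
-/

theorem Real.hasDerivAt_tanh (x : ℝ) : HasDerivAt tanh (cosh x ^ 2)⁻¹ x := by
  have hcosh : cosh x ≠ 0 := (cosh_pos x).ne'
  have hquot := (hasDerivAt_sinh x).div (hasDerivAt_cosh x) hcosh
  rw [show (tanh : ℝ → ℝ) = fun y => sinh y / cosh y from funext tanh_eq_sinh_div_cosh]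
  refine hquot.congr_deriv ?_
  field_simp
  linear_combination cosh_sq_sub_sinh_sq x

theorem Real.one_sub_tanh_sq (x : ℝ) : 1 - tanh x ^ 2 = (cosh x ^ 2)⁻¹ := by
  have hcosh : cosh x ≠ 0 := (cosh_pos x).ne'
  rw [tanh_eq_sinh_div_cosh]
  field_simp
  linear_combination cosh_sq_sub_sinh_sq x

theorem deriv_deriv_one_sub_mul_sq_div (c d : ℝ) :
    deriv (deriv fun x : ℝ => (1 - c * x ^ 2) / d) = fun _ => -(2 * c / d) := by
  have hderiv : deriv (fun x : ℝ => (1 - c * x ^ 2) / d) = fun x => -(2 * c / d) * x := by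
    funext x
    refine (((hasDerivAt_pow 2 x).const_mul c).const_sub 1).div_const d |>.deriv.trans ?_
    ring
  rw [hderiv]
  funext x
  simp

theorem sq_mul_lt_one_of_abs_lt_one_div {b x : ℝ} (hb : 0 < b) (hx : |x| < 1 / b) :
    (b * x) ^ 2 < 1 := by
  rw [sq_lt_one_iff_abs_lt_one, abs_mul, abs_of_pos hb]
  rwa [lt_div_iff₀ hb, mul_comm] at hx

theorem ellis_madsen_schrodinger_solution_general
    (A ω : ℝ) (hA : 0 < A) (hω : 0 < ω)
    (u P σ : ℝ → ℝ)
    (hu : u = fun x => (1 - A ^ 4 * ω ^ 2 * x ^ 2) / A ^ 2)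
    (hP : P = fun x => 2 * A ^ 2 * (1 - A ^ 2 * ω ^ 2) / (1 - A ^ 4 * ω ^ 2 * x ^ 2))
    (hσ : σ = fun t => Real.tanh (ω * t) / (A ^ 2 * ω)) :
    (∀ x : ℝ, |x| < 1 / (A ^ 2 * ω) →
      deriv (deriv u) x - P x * u x = -2) ∧
    (∀ t : ℝ, deriv σ t = u (σ t)) ∧
    (∀ t : ℝ, u (σ t) = ((A * Real.cosh (ω * t)) ^ 2)⁻¹) := by
  subst hu hP hσ
  have hA0 : A ≠ 0 := hA.ne'
  have hω0 : ω ≠ 0 := hω.ne'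
  have hu_σ (t : ℝ) : (1 - A ^ 4 * ω ^ 2 * (tanh (ω * t) / (A ^ 2 * ω)) ^ 2) / A ^ 2
      = ((A * cosh (ω * t)) ^ 2)⁻¹ := by
    rw [show A ^ 4 * ω ^ 2 * (tanh (ω * t) / (A ^ 2 * ω)) ^ 2 = tanh (ω * t) ^ 2 by
      field_simp, one_sub_tanh_sq]
    ring
  refine ⟨fun x hx => ?_, fun t => ?_, hu_σ⟩
  · have hden : 1 - A ^ 4 * ω ^ 2 * x ^ 2 ≠ 0 := by
      have := sq_mul_lt_one_of_abs_lt_one_div (by positivity) hx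
      nlinarith
    rw [deriv_deriv_one_sub_mul_sq_div]
    field_simp
    ring
  · have hσ' := ((hasDerivAt_tanh (ω * t)).comp t ((hasDerivAt_id t).const_mul ω)).div_const (A ^ 2 * ω)
    refine hσ'.deriv.trans ?_
    beta_reduce
    rw [hu_σ]
    field_simp

/-- The Ellis–Madsen example: u(x) = (1 − A⁴ω²x²)/A² solves the
Schrödinger-type equation with E = 0, n = 4, k = 1 and potential
P(x) = 2A²(1 − A²ω²)/(1 − A⁴ω²x²), and σ(t) = tanh(ωt)/(A²ω) satisfies
σ' = u∘σ with u(σ(t)) = (A cosh(ωt))^(−2). -/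
theorem ellis_madsen_schrodinger_solution
    (A ω K : ℝ) (hA : 0 < A) (hω : 0 < ω) (hK : 0 < K)
    (hAω : A ^ 2 * ω ^ 2 < 1)
    (u P σ : ℝ → ℝ)
    (hu : u = fun x => (1 - A ^ 4 * ω ^ 2 * x ^ 2) / A ^ 2)
    (hP : P = fun x => 2 * A ^ 2 * (1 - A ^ 2 * ω ^ 2) / (1 - A ^ 4 * ω ^ 2 * x ^ 2))
    (hσ : σ = fun t => Real.tanh (ω * t) / (A ^ 2 * ω)) :
    (∀ x : ℝ, |x| < 1 / (A ^ 2 * ω) →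
      deriv (deriv u) x - P x * u x = -2) ∧
    (∀ t : ℝ, deriv σ t = u (σ t)) ∧
    (∀ t : ℝ, u (σ t) = ((A * Real.cosh (ω * t)) ^ 2)⁻¹) :=
  ellis_madsen_schrodinger_solution_general A ω hA hω u P σ hu hP hσ
end

section
/- Let A > 0, ω > 0, K > 0, φ₀ ∈ ℝ with A²ω² < 1, and set B = sqrt(2(1 − A²ω²))/(K·A). Define a(t) = A cosh(ωt), φ(t) = φ₀ + (B/ω)·arcsin(tanh(ωt)), V(x) = 3ω²/K² + B²·cos²((ω/B)(x − φ₀)), H(t) = a'(t)/a(t), ρ(t) = φ'(t)²/2 + V(φ(t)), p(t) = φ'(t)²/2 − V(φ(t)). Then for all t ∈ ℝ both Einstein equations hold with curvature k = 1 and no matter (D = 0): H(t)² + 1/a(t)² = (K²/3) ρ(t) and a''(t)/a(t) = −(K²/6)(ρ(t) + 3 p(t)). -/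
/-!
Write `c = cosh (ω t)`, `s = sinh (ω t)`. The field is `φ₀ + (B/ω) gd(ω t)` with `gd = arcsin ∘ tanh`
the Gudermannian function, whose derivative is `sech`; hence `φ' = B / c`, and since
`cos (gd x) = sech x` also `V (φ t) = 3ω²/K² + B²/c²`. So `ρ + 3p = 2φ'² - 2V = -6ω²/K²`, which
gives the acceleration equation `a''/a = ω²`, and the Friedmann equation reduces to
`c² - s² = 1` together with `K² A² B² = 2 (1 - A² ω²)`.
-/

open Real

namespace Real

theorem one_sub_tanh_sq_s15 (x : ℝ) : 1 - tanh x ^ 2 = 1 / cosh x ^ 2 := by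
  have := (cosh_pos x).ne'
  rw [tanh_eq_sinh_div_cosh]
  field_simp
  linear_combination cosh_sq x

theorem sqrt_one_sub_tanh_sq (x : ℝ) : √(1 - tanh x ^ 2) = 1 / cosh x := by
  rw [one_sub_tanh_sq_s15, ← one_div_pow, sqrt_sq (by positivity)]

theorem hasDerivAt_tanh_s15 (x : ℝ) : HasDerivAt tanh (1 / cosh x ^ 2) x := by
  have h := (hasDerivAt_sinh x).div (hasDerivAt_cosh x) (cosh_pos x).ne'
  rw [show sinh / cosh = tanh from funext fun y => (tanh_eq_sinh_div_cosh y).symm] at h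
  refine h.congr_deriv ?_
  linear_combination (cosh_sq x) / cosh x ^ 2

theorem cos_arcsin_tanh (x : ℝ) : cos (arcsin (tanh x)) = 1 / cosh x := by
  rw [cos_arcsin, sqrt_one_sub_tanh_sq]

theorem hasDerivAt_arcsin_tanh (x : ℝ) :
    HasDerivAt (fun y => arcsin (tanh y)) (1 / cosh x) x := by
  have h := (hasDerivAt_arcsin (neg_one_lt_tanh x).ne' (tanh_lt_one x).ne).comp x
    (hasDerivAt_tanh_s15 x)
  rw [sqrt_one_sub_tanh_sq] at h
  refine h.congr_deriv ?_
  have := (cosh_pos x).ne'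
  field_simp

end Real

theorem deriv_const_mul_cosh_mul (A ω : ℝ) :
    deriv (fun t => A * cosh (ω * t)) = fun t => A * ω * sinh (ω * t) := by
  funext t
  refine (((hasDerivAt_id t).const_mul ω).cosh.const_mul A).deriv.trans ?_
  simp only [id, mul_one]
  ring

theorem deriv_const_mul_sinh_mul (A ω : ℝ) :
    deriv (fun t => A * sinh (ω * t)) = fun t => A * ω * cosh (ω * t) := by
  funext t
  refine (((hasDerivAt_id t).const_mul ω).sinh.const_mul A).deriv.trans ?_
  simp only [id, mul_one]
  ring

theorem hasDerivAt_const_add_div_mul_arcsin_tanh {ω : ℝ} (hω : ω ≠ 0) (φ₀ B t : ℝ) :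
    HasDerivAt (fun t => φ₀ + B / ω * arcsin (tanh (ω * t))) (B / cosh (ω * t)) t := by
  have h := (((hasDerivAt_arcsin_tanh (ω * t)).comp t
    ((hasDerivAt_id t).const_mul ω)).const_mul (B / ω)).const_add φ₀
  refine h.congr_deriv ?_
  field_simp

/-- The Ellis–Madsen closed-universe solution: a(t) = A cosh(ωt),
φ(t) = φ₀ + (B/ω) arcsin(tanh(ωt)), V(x) = 3ω²/K² + B² cos²((ω/B)(x − φ₀))
solves both Einstein equations with k = 1 and no matter. -/
theorem ellis_madsen_solution
    (A ω K φ₀ : ℝ) (hA : 0 < A) (hω : 0 < ω) (hK : 0 < K)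
    (hAω : A ^ 2 * ω ^ 2 < 1)
    (B : ℝ) (hB : B = Real.sqrt (2 * (1 - A ^ 2 * ω ^ 2)) / (K * A))
    (a φ V H ρ p : ℝ → ℝ)
    (ha : a = fun t => A * Real.cosh (ω * t))
    (hφ : φ = fun t => φ₀ + B / ω * Real.arcsin (Real.tanh (ω * t)))
    (hV : V = fun x => 3 * ω ^ 2 / K ^ 2 + B ^ 2 * (Real.cos (ω / B * (x - φ₀))) ^ 2)
    (hH : H = fun t => deriv a t / a t)
    (hρ : ρ = fun t => (deriv φ t) ^ 2 / 2 + V (φ t))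
    (hp : p = fun t => (deriv φ t) ^ 2 / 2 - V (φ t)) :
    ∀ t : ℝ,
      H t ^ 2 + 1 / a t ^ 2 = K ^ 2 / 3 * ρ t ∧
      deriv (deriv a) t / a t = -(K ^ 2 / 6) * (ρ t + 3 * p t) := by
  intro t
  have hB_pos : 0 < B := hB ▸ div_pos (sqrt_pos.2 (by nlinarith)) (by positivity)
  have hKAB : K ^ 2 * A ^ 2 * B ^ 2 = 2 * (1 - A ^ 2 * ω ^ 2) := by
    rw [hB, div_pow, sq_sqrt (by nlinarith)]
    field_simp
  have hφ' : deriv φ t = B / cosh (ω * t) :=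
    hφ ▸ (hasDerivAt_const_add_div_mul_arcsin_tanh hω.ne' φ₀ B t).deriv
  have hVφ : V (φ t) = 3 * ω ^ 2 / K ^ 2 + B ^ 2 * (1 / cosh (ω * t)) ^ 2 := by
    have harg : ω / B * (φ t - φ₀) = arcsin (tanh (ω * t)) := by
      rw [hφ]
      field_simp
      ring
    rw [hV]
    dsimp only
    rw [harg, cos_arcsin_tanh]
  have ha' : deriv a = fun t => A * ω * sinh (ω * t) := ha ▸ deriv_const_mul_cosh_mul A ω
  have ha'' : deriv (deriv a) t = A * ω * ω * cosh (ω * t) := by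
    rw [ha', deriv_const_mul_sinh_mul]
  have ha_t : a t = A * cosh (ω * t) := by rw [ha]
  subst hH hρ hp
  dsimp only
  rw [ha'', ha', ha_t, hφ', hVφ]
  dsimp only
  have := (cosh_pos (ω * t)).ne'
  constructor
  · field_simp
    linear_combination (-(6 * A ^ 2 * ω ^ 2)) * cosh_sq (ω * t) - 3 * hKAB
  · field_simp
    ring
end

section
/- Let a₀ > 0, K > 0, φ₀ ∈ ℝ. Define a(t) = a₀ + t²/(2a₀), φ(t) = φ₀ + (1/K)·log(1 + t²/(2a₀²)), V(x) = (5·exp(−K(x − φ₀)) − 2·exp(−2K(x − φ₀)))/(K² a₀²), H(t) = a'(t)/a(t), ρ(t) = φ'(t)²/2 + V(φ(t)), p(t) = φ'(t)²/2 − V(φ(t)). Then for all t ∈ ℝ: V(φ(t)) = (10t² + 12a₀²)/(K²(2a₀² + t²)²), and both Einstein equations hold with curvature k = 1 and no matter (D = 0): H(t)² + 1/a(t)² = (K²/3) ρ(t) and a''(t)/a(t) = −(K²/6)(ρ(t) + 3 p(t)). -/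
open Real

/-! Since `e^{-K(φ - φ₀)} = (1 + t²/(2a₀²))⁻¹ = a₀ / a`, the potential along the solution is a
rational function of `t`; together with `a' = t/a₀`, `a'' = 1/a₀` and
`φ' = 2t / (K(2a₀² + t²))`, both Einstein equations become identities between rational
functions of `t`. -/

section ScaleFactor

variable (a₀ : ℝ)

theorem hasDerivAt_scaleFactor (t : ℝ) :
    HasDerivAt (fun t : ℝ => a₀ + t ^ 2 / (2 * a₀)) (t / a₀) t := by
  have h : HasDerivAt (fun t : ℝ => a₀ + t ^ 2 / (2 * a₀)) (2 * t / (2 * a₀)) t := by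
    simpa using ((hasDerivAt_pow 2 t).div_const (2 * a₀)).const_add a₀
  rwa [mul_div_mul_left _ _ two_ne_zero] at h

theorem deriv_scaleFactor :
    deriv (fun t : ℝ => a₀ + t ^ 2 / (2 * a₀)) = fun t => t / a₀ :=
  funext fun t => (hasDerivAt_scaleFactor a₀ t).deriv

theorem deriv_deriv_scaleFactor (t : ℝ) :
    deriv (deriv fun t : ℝ => a₀ + t ^ 2 / (2 * a₀)) t = 1 / a₀ := by
  rw [deriv_scaleFactor, deriv_div_const, deriv_id'']

end ScaleFactor

theorem deriv_scalarField {a₀ : ℝ} (ha₀ : a₀ ≠ 0) (K φ₀ t : ℝ) :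
    deriv (fun t : ℝ => φ₀ + 1 / K * log (1 + t ^ 2 / (2 * a₀ ^ 2))) t
      = 2 * t / (K * (2 * a₀ ^ 2 + t ^ 2)) := by
  have hu : 1 + t ^ 2 / (2 * a₀ ^ 2) ≠ 0 := by positivity
  have hdu : HasDerivAt (fun t : ℝ => 1 + t ^ 2 / (2 * a₀ ^ 2)) (2 * t / (2 * a₀ ^ 2)) t := by
    simpa using ((hasDerivAt_pow 2 t).div_const (2 * a₀ ^ 2)).const_add 1
  rw [(((hdu.log hu).const_mul (1 / K)).const_add φ₀).deriv]
  field_simp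

theorem exp_neg_mul_sub_of_log {K u : ℝ} (hK : K ≠ 0) (hu : 0 < u) (φ₀ : ℝ) :
    exp (-K * (φ₀ + 1 / K * log u - φ₀)) = u⁻¹ := by
  rw [show -K * (φ₀ + 1 / K * log u - φ₀) = -log u by field_simp; ring, exp_neg, exp_log hu]

theorem exp_neg_two_mul_sub_of_log {K u : ℝ} (hK : K ≠ 0) (hu : 0 < u) (φ₀ : ℝ) :
    exp (-2 * K * (φ₀ + 1 / K * log u - φ₀)) = u⁻¹ ^ 2 := by
  rw [show -2 * K * (φ₀ + 1 / K * log u - φ₀)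
      = -K * (φ₀ + 1 / K * log u - φ₀) + -K * (φ₀ + 1 / K * log u - φ₀) by ring,
    exp_add, exp_neg_mul_sub_of_log hK hu, sq]

theorem potential_along_scalarField {a₀ K : ℝ} (ha₀ : a₀ ≠ 0) (hK : K ≠ 0) (φ₀ t : ℝ) :
    (5 * exp (-K * (φ₀ + 1 / K * log (1 + t ^ 2 / (2 * a₀ ^ 2)) - φ₀))
      - 2 * exp (-2 * K * (φ₀ + 1 / K * log (1 + t ^ 2 / (2 * a₀ ^ 2)) - φ₀))) / (K ^ 2 * a₀ ^ 2)
      = (10 * t ^ 2 + 12 * a₀ ^ 2) / (K ^ 2 * (2 * a₀ ^ 2 + t ^ 2) ^ 2) := by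
  have hu : 0 < 1 + t ^ 2 / (2 * a₀ ^ 2) := by positivity
  rw [exp_neg_mul_sub_of_log hK hu, exp_neg_two_mul_sub_of_log hK hu]
  field_simp
  ring

/-- The Özer–Taha solution with a(t) = a₀ + t²/(2a₀):
V(φ(t)) = (10t² + 12a₀²)/(K²(2a₀² + t²)²) and both Einstein equations hold
with k = 1 and no matter. -/
theorem ozer_taha_solution_two
    (a₀ K φ₀ : ℝ) (ha₀ : 0 < a₀) (hK : 0 < K)
    (a φ V H ρ p : ℝ → ℝ)
    (ha : a = fun t => a₀ + t ^ 2 / (2 * a₀))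
    (hφ : φ = fun t => φ₀ + 1 / K * Real.log (1 + t ^ 2 / (2 * a₀ ^ 2)))
    (hV : V = fun x => (5 * Real.exp (-K * (x - φ₀))
      - 2 * Real.exp (-2 * K * (x - φ₀))) / (K ^ 2 * a₀ ^ 2))
    (hH : H = fun t => deriv a t / a t)
    (hρ : ρ = fun t => (deriv φ t) ^ 2 / 2 + V (φ t))
    (hp : p = fun t => (deriv φ t) ^ 2 / 2 - V (φ t)) :
    ∀ t : ℝ,
      V (φ t) = (10 * t ^ 2 + 12 * a₀ ^ 2) / (K ^ 2 * (2 * a₀ ^ 2 + t ^ 2) ^ 2) ∧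
      H t ^ 2 + 1 / a t ^ 2 = K ^ 2 / 3 * ρ t ∧
      deriv (deriv a) t / a t = -(K ^ 2 / 6) * (ρ t + 3 * p t) := by
  subst ha hφ hV hH hρ hp
  intro t
  have ha : a₀ + t ^ 2 / (2 * a₀) ≠ 0 := by positivity
  rw [deriv_deriv_scaleFactor]
  simp only [deriv_scaleFactor, deriv_scalarField ha₀.ne',
    potential_along_scalarField ha₀.ne' hK.ne']
  refine ⟨trivial, ?_, ?_⟩ <;> field_simp <;> ring
end

section
/- Let a₀ ≠ 0, K > 0, φ₀' ∈ ℝ. Define a(t) = sqrt(a₀² + t²), φ(t) = φ₀' + (1/K)·log(1 + t²/a₀²), V(x) = (4·exp(−K(x − φ₀')) − exp(−2K(x − φ₀')))/(K² a₀²), H(t) = a'(t)/a(t), ρ(t) = φ'(t)²/2 + V(φ(t)), p(t) = φ'(t)²/2 − V(φ(t)). Then for all t ∈ ℝ: V(φ(t)) = (4t² + 3a₀²)/(K²(a₀² + t²)²), and both Einstein equations hold with curvature k = 1 and no matter (D = 0): H(t)² + 1/a(t)² = (K²/3) ρ(t) and a''(t)/a(t) = −(K²/6)(ρ(t) + 3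 p(t)). -/
/-!
Both sides of each Einstein equation are rational functions of `t` once the exponentials in the
potential are evaluated along the field: with `s = a₀² + t²`, `exp (-K (φ t - φ₀')) = a₀² / s`,
so `V (φ t)`, `φ' t = 2t / (K s)`, `H t = t / s` and `a'' t / a t = a₀² / s²` are all explicit, and
the two equations reduce to polynomial identities in `t` and `a₀²`.
-/

open Real

section ScaleFactor

variable {c : ℝ}

theorem hasDerivAt_sqrt_const_add_sq (hc : 0 < c) (t : ℝ) :
    HasDerivAt (fun t => √(c + t ^ 2)) (t / √(c + t ^ 2)) t := by
  have hs : c + t ^ 2 ≠ 0 := by positivity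
  have h := ((hasDerivAt_pow 2 t).const_add c).sqrt hs
  convert h using 1
  field_simp
  ring

theorem deriv_sqrt_const_add_sq (hc : 0 < c) :
    deriv (fun t => √(c + t ^ 2)) = fun t => t / √(c + t ^ 2) :=
  funext fun t => (hasDerivAt_sqrt_const_add_sq hc t).deriv

theorem deriv_deriv_sqrt_const_add_sq (hc : 0 < c) (t : ℝ) :
    deriv (deriv fun t => √(c + t ^ 2)) t = c / ((c + t ^ 2) * √(c + t ^ 2)) := by
  have hs : 0 < c + t ^ 2 := by positivity
  have hsqrt : 0 < √(c + t ^ 2) := sqrt_pos.mpr hs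
  have h : HasDerivAt (fun t => t / √(c + t ^ 2))
      ((1 * √(c + t ^ 2) - t * (t / √(c + t ^ 2))) / √(c + t ^ 2) ^ 2) t :=
    (hasDerivAt_id' t).div (hasDerivAt_sqrt_const_add_sq hc t) hsqrt.ne'
  rw [deriv_sqrt_const_add_sq hc, h.deriv]
  field_simp
  rw [sq_sqrt hs.le]
  ring

end ScaleFactor

section Field

variable {c : ℝ}

theorem hasDerivAt_log_one_add_sq_div (hc : 0 < c) (t : ℝ) :
    HasDerivAt (fun t => log (1 + t ^ 2 / c)) (2 * t / (c + t ^ 2)) t := by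
  have hpos : 0 < 1 + t ^ 2 / c := by positivity
  have h := (((hasDerivAt_pow 2 t).div_const c).const_add 1).log hpos.ne'
  convert h using 1
  field_simp
  ring

theorem deriv_const_add_mul_log_one_add_sq_div (hc : 0 < c) (φ₀ k t : ℝ) :
    deriv (fun t => φ₀ + k * log (1 + t ^ 2 / c)) t = k * (2 * t / (c + t ^ 2)) :=
  (((hasDerivAt_log_one_add_sq_div hc t).const_mul k).const_add φ₀).deriv

theorem exp_neg_mul_one_div_mul_log {K x : ℝ} (hK : K ≠ 0) (hx : 0 < x) :
    exp (-K * (1 / K * log x)) = x⁻¹ := by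
  rw [show -K * (1 / K * log x) = -log x by field_simp, exp_neg, exp_log hx]

theorem potential_along_field {K : ℝ} (hc : 0 < c) (hK : K ≠ 0) (φ₀ t : ℝ) :
    (4 * exp (-K * (φ₀ + 1 / K * log (1 + t ^ 2 / c) - φ₀))
        - exp (-2 * K * (φ₀ + 1 / K * log (1 + t ^ 2 / c) - φ₀))) / (K ^ 2 * c)
      = (4 * t ^ 2 + 3 * c) / (K ^ 2 * (c + t ^ 2) ^ 2) := by
  have hpos : 0 < 1 + t ^ 2 / c := by positivity
  have hu : exp (-K * (φ₀ + 1 / K * log (1 + t ^ 2 / c) - φ₀)) = (1 + t ^ 2 / c)⁻¹ := by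
    rw [add_sub_cancel_left, exp_neg_mul_one_div_mul_log hK hpos]
  have hu2 : exp (-2 * K * (φ₀ + 1 / K * log (1 + t ^ 2 / c) - φ₀))
      = ((1 + t ^ 2 / c)⁻¹) ^ 2 := by
    rw [← hu, ← exp_nat_mul]
    ring_nf
  rw [hu, hu2]
  field_simp
  ring

end Field

/-- The Özer–Taha solution with a(t) = √(a₀² + t²):
V(φ(t)) = (4t² + 3a₀²)/(K²(a₀² + t²)²) and both Einstein equations hold
with k = 1 and no matter. -/
theorem ozer_taha_solution_one
    (a₀ K φ₀' : ℝ) (ha₀ : a₀ ≠ 0) (hK : 0 < K)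
    (a φ V H ρ p : ℝ → ℝ)
    (ha : a = fun t => Real.sqrt (a₀ ^ 2 + t ^ 2))
    (hφ : φ = fun t => φ₀' + 1 / K * Real.log (1 + t ^ 2 / a₀ ^ 2))
    (hV : V = fun x => (4 * Real.exp (-K * (x - φ₀'))
      - Real.exp (-2 * K * (x - φ₀'))) / (K ^ 2 * a₀ ^ 2))
    (hH : H = fun t => deriv a t / a t)
    (hρ : ρ = fun t => (deriv φ t) ^ 2 / 2 + V (φ t))
    (hp : p = fun t => (deriv φ t) ^ 2 / 2 - V (φ t)) :
    ∀ t : ℝ,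
      V (φ t) = (4 * t ^ 2 + 3 * a₀ ^ 2) / (K ^ 2 * (a₀ ^ 2 + t ^ 2) ^ 2) ∧
      H t ^ 2 + 1 / a t ^ 2 = K ^ 2 / 3 * ρ t ∧
      deriv (deriv a) t / a t = -(K ^ 2 / 6) * (ρ t + 3 * p t) := by
  intro t
  have hc : 0 < a₀ ^ 2 := by positivity
  have hs : 0 < a₀ ^ 2 + t ^ 2 := by positivity
  have hVφ : V (φ t) = (4 * t ^ 2 + 3 * a₀ ^ 2) / (K ^ 2 * (a₀ ^ 2 + t ^ 2) ^ 2) := by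
    rw [hV, hφ]
    exact potential_along_field hc hK.ne' φ₀' t
  have hφ' : deriv φ t = 1 / K * (2 * t / (a₀ ^ 2 + t ^ 2)) := by
    rw [hφ]
    exact deriv_const_add_mul_log_one_add_sq_div hc φ₀' (1 / K) t
  have ha_sq : a t ^ 2 = a₀ ^ 2 + t ^ 2 := by
    rw [ha]
    exact sq_sqrt hs.le
  have hH_eq : H t = t / (a₀ ^ 2 + t ^ 2) := by
    simp only [hH, ha, deriv_sqrt_const_add_sq hc]
    rw [div_div, mul_self_sqrt hs.le]
  have ha'' : deriv (deriv a) t / a t = a₀ ^ 2 / (a₀ ^ 2 + t ^ 2) ^ 2 := by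
    rw [ha, deriv_deriv_sqrt_const_add_sq hc, div_div, mul_assoc, mul_self_sqrt hs.le, ← sq]
  have hK_ne := hK.ne'
  refine ⟨hVφ, ?_, ?_⟩
  · simp only [hρ]
    rw [hH_eq, ha_sq, hφ', hVφ]
    field_simp
    ring
  · simp only [hρ, hp]
    rw [ha'', hφ', hVφ]
    field_simp
    ring
end
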